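/- arXiv:1304.6621 — 5 statements merged into one kernel-verified Lean document; each statement's English description precedes it below -/
import Mathlib

section
/- Let M ≥ 1 be an integer, B a complex Banach space, r₀ > 0, and v : Δ → B a holomorphic function on the disc Δ = {z ∈ ℂ : |z| < r₀}. Then there exists a unique tuple (u, E₀, …, E_{M−2}) consisting of a holomorphic function u : Δ → B and constants E₀, …, E_{M−2} ∈ B such that (z^M/2)·u'(z) + (M/4)·z^{M−1}·u(z) = E₀ + z·E₁ + … + z^{M−2}·E_{M−2} + v(z) for all z ∈ Δ. Moreover, for every r with 0 < r < r₀: ‖E_j‖_B ≤ r^{−j}·‖v‖_{B(r)} for j = 0,…,M−2; ‖u‖_{B(r)} ≤ 4·r^{1−M}·‖v‖_{B(r)}; and ‖u'‖_{B(r)} ≤ 2·r^{−M}·‖v‖_{B(r)}. -/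
open scoped ENNReal

/-- The `j`-th Taylor coefficient at `0` of a `B`-valued function. -/
noncomputable def taylorCoeff {B : Type*} [NormedAddCommGroup B] [NormedSpace ℂ B]
    (w : ℂ → B) (j : ℕ) : B :=
  (1 / (Nat.factorial j : ℂ)) • iteratedDeriv j w 0

/-- `‖w‖_{B(r)} := Σ_{j≥0} ‖w_j‖·r^j ∈ [0,∞]` where `w_j` are the Taylor coefficients
of `w` at `0`. -/
noncomputable def bNorm {B : Type*} [NormedAddCommGroup B] [NormedSpace ℂ B]
    (w : ℂ → B) (r : ℝ) : ℝ≥0∞ :=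
  ∑' j : ℕ, (‖taylorCoeff w j‖₊ : ℝ≥0∞) * (ENNReal.ofReal r) ^ j

/-! The operator `u ↦ (z ^ M / 2) u' + (M / 4) z ^ (M - 1) u` sends `z ^ k` to
`(k / 2 + M / 4) z ^ (k + M - 1)`. Comparing Taylor coefficients at `0`, the equation holds exactly
when `E j = -v_j` for `j < M - 1` and `u_k = v_{k + M - 1} / (k / 2 + M / 4)`. Since
`k / 2 + M / 4 ≥ 1 / 4`, these coefficients satisfy `‖u_k‖ ≤ 4 ‖v_{k + M - 1}‖` and
`(k + 1) ‖u_{k + 1}‖ ≤ 2 ‖v_{k + M}‖`, so they define a holomorphic function on the whole disc,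
and the estimates follow term by term. -/

open scoped NNReal

section

variable {B : Type*} [NormedAddCommGroup B] [NormedSpace ℂ B]

noncomputable def coeffSeries (c : ℕ → B) : FormalMultilinearSeries ℂ ℂ B :=
  fun n => ContinuousMultilinearMap.mkPiRing ℂ (Fin n) (c n)

@[simp]
lemma coeff_coeffSeries (c : ℕ → B) (n : ℕ) : (coeffSeries c).coeff n = c n := by
  simp [coeffSeries, FormalMultilinearSeries.coeff]

@[simp]
lemma norm_coeffSeries (c : ℕ → B) (n : ℕ) : ‖coeffSeries c n‖ = ‖c n‖ :=
  ContinuousMultilinearMap.norm_mkPiRing (c n)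

lemma hasFPowerSeriesOnBall_coeffSeries {A : ℕ → B} {f : ℂ → B} {r : ℝ} (hr : 0 < r)
    (h : ∀ z ∈ Metric.ball (0 : ℂ) r, HasSum (fun n => z ^ n • A n) (f z)) :
    HasFPowerSeriesOnBall f (coeffSeries A) 0 (ENNReal.ofReal r) where
  r_le := by
    refine ENNReal.le_of_forall_nnreal_lt fun ρ hρ => ?_
    have hρr : (ρ : ℝ) < r := by
      simpa using (ENNReal.coe_lt_ofReal).mp hρ
    have hterms :=
      (h ρ (by simpa [abs_of_nonneg ρ.coe_nonneg] using hρr)).summable.tendsto_atTop_zero.norm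
    refine (coeffSeries A).le_radius_of_tendsto (l := 0) ?_
    simpa [norm_smul, mul_comm] using hterms
  r_pos := ENNReal.ofReal_pos.mpr hr
  hasSum {y} hy := by
    rw [Metric.eball_ofReal] at hy
    simpa [FormalMultilinearSeries.apply_eq_pow_smul_coeff] using h y hy

lemma radius_coeffSeries_le_radius_smul_shift (a : ℕ → B) {s : ℕ → ℂ} {C : ℝ}
    (hs : ∀ k, ‖s k‖ ≤ C) (N : ℕ) :
    (coeffSeries a).radius ≤ (coeffSeries fun k => s k • a (k + N)).radius := by
  refine ENNReal.le_of_forall_nnreal_lt fun ρ hρ => ?_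
  rcases eq_or_ne ρ 0 with rfl | hρ0
  · simp
  obtain ⟨K, -, hK⟩ := (coeffSeries a).norm_mul_pow_le_of_lt_radius hρ
  have hC : 0 ≤ C := (norm_nonneg _).trans (hs 0)
  refine (coeffSeries _).le_radius_of_bound (C * K / (ρ : ℝ) ^ N) fun k => ?_
  have hρpos : 0 < (ρ : ℝ) := by positivity
  calc ‖coeffSeries (fun k => s k • a (k + N)) k‖ * (ρ : ℝ) ^ k
      ≤ C * (‖a (k + N)‖ * (ρ : ℝ) ^ (k + N)) / (ρ : ℝ) ^ N := by
        rw [norm_coeffSeries, norm_smul, pow_add, mul_div_assoc, mul_div_assoc,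
          mul_div_cancel_right₀ _ (by positivity), ← mul_assoc]
        gcongr
        exact hs k
    _ ≤ C * K / (ρ : ℝ) ^ N := by
        gcongr
        simpa using hK (k + N)

lemma taylorCoeff_deriv (w : ℂ → B) (n : ℕ) :
    taylorCoeff (deriv w) n = ((n + 1 : ℕ) : ℂ) • taylorCoeff w (n + 1) := by
  rw [taylorCoeff, taylorCoeff, ← iteratedDeriv_succ', smul_smul, Nat.factorial_succ]
  congr 1
  push_cast
  field_simp

lemma norm_taylorCoeff_le_bNorm (w : ℂ → B) {r : ℝ} (hr : 0 < r) (j : ℕ) :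
    (‖taylorCoeff w j‖₊ : ℝ≥0∞) ≤ bNorm w r / ENNReal.ofReal r ^ j := by
  rw [ENNReal.le_div_iff_mul_le (Or.inl (pow_ne_zero _ (ENNReal.ofReal_pos.mpr hr).ne'))
    (Or.inl (ENNReal.pow_ne_top ENNReal.ofReal_ne_top))]
  exact ENNReal.le_tsum (f := fun j => (‖taylorCoeff w j‖₊ : ℝ≥0∞) * ENNReal.ofReal r ^ j) j

lemma bNorm_le_of_taylorCoeff_eq_smul {w v : ℂ → B} {s : ℕ → ℂ} {C : ℝ≥0} (hs : ∀ k, ‖s k‖ ≤ C)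
    {N : ℕ} (h : ∀ k, taylorCoeff w k = s k • taylorCoeff v (k + N)) {r : ℝ} (hr : 0 < r) :
    bNorm w r ≤ C * bNorm v r / ENNReal.ofReal r ^ N := by
  set ρ := ENNReal.ofReal r
  rw [ENNReal.le_div_iff_mul_le (Or.inl (pow_ne_zero _ (ENNReal.ofReal_pos.mpr hr).ne'))
    (Or.inl (ENNReal.pow_ne_top ENNReal.ofReal_ne_top))]
  calc bNorm w r * ρ ^ N = ∑' k, (‖taylorCoeff w k‖₊ : ℝ≥0∞) * ρ ^ (k + N) := by
        simp only [bNorm, ← ENNReal.tsum_mul_right, pow_add, mul_assoc, ρ]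
    _ ≤ ∑' k, C * ((‖taylorCoeff v (k + N)‖₊ : ℝ≥0∞) * ρ ^ (k + N)) := by
        refine ENNReal.tsum_le_tsum fun k => ?_
        rw [h k, nnnorm_smul, ENNReal.coe_mul, ← mul_assoc]
        gcongr
        exact_mod_cast hs k
    _ = C * ∑' k, (‖taylorCoeff v (k + N)‖₊ : ℝ≥0∞) * ρ ^ (k + N) := ENNReal.tsum_mul_left
    _ ≤ C * bNorm v r := by
        gcongr
        exact ENNReal.tsum_comp_le_tsum_of_injective (add_left_injective N)
          (fun n => (‖taylorCoeff v n‖₊ : ℝ≥0∞) * ρ ^ n)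

noncomputable def odeOp (M : ℕ) (u : ℂ → B) (z : ℂ) : B :=
  (z ^ M / 2) • deriv u z + ((M : ℂ) / 4 * z ^ (M - 1)) • u z

/-- `odeOp M` maps `z ^ k` to `odeWeight M k • z ^ (k + M - 1)`. -/
noncomputable def odeWeight (M k : ℕ) : ℂ := (k : ℂ) / 2 + (M : ℂ) / 4

lemma norm_odeWeight (M k : ℕ) : ‖odeWeight M k‖ = k / 2 + M / 4 := by
  rw [odeWeight, show (k : ℂ) / 2 + (M : ℂ) / 4 = ((k / 2 + M / 4 : ℝ) : ℂ) by push_cast; ring,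
    Complex.norm_of_nonneg (by positivity)]

lemma odeWeight_ne_zero {M : ℕ} (hM : 1 ≤ M) (k : ℕ) : odeWeight M k ≠ 0 := by
  have : (1 : ℝ) ≤ M := by exact_mod_cast hM
  rw [← norm_pos_iff, norm_odeWeight]
  positivity

lemma norm_inv_odeWeight_le {M : ℕ} (hM : 1 ≤ M) (k : ℕ) : ‖(odeWeight M k)⁻¹‖ ≤ 4 := by
  have : (1 : ℝ) ≤ M := by exact_mod_cast hM
  rw [norm_inv, norm_odeWeight]
  exact inv_le_of_inv_le₀ (by norm_num) (by have : (0 : ℝ) ≤ k := k.cast_nonneg; linarith)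

lemma norm_natCast_mul_inv_odeWeight_le (M k : ℕ) : ‖(k : ℂ) * (odeWeight M k)⁻¹‖ ≤ 2 := by
  rcases Nat.eq_zero_or_pos k with rfl | hk
  · simp
  have hk' : (0 : ℝ) < k := by exact_mod_cast hk
  rw [norm_mul, norm_inv, norm_odeWeight, Complex.norm_natCast, ← div_eq_mul_inv,
    div_le_iff₀ (by positivity)]
  have : (0 : ℝ) ≤ M := M.cast_nonneg
  linarith

variable [CompleteSpace B]

lemma HasFPowerSeriesOnBall.taylorCoeff_eq {f : ℂ → B} {p : FormalMultilinearSeries ℂ ℂ B}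
    {R : ℝ≥0∞} (h : HasFPowerSeriesOnBall f p 0 R) (n : ℕ) : taylorCoeff f n = p.coeff n := by
  rw [taylorCoeff, iteratedDeriv_eq_iteratedFDeriv, ← h.factorial_smul, ← Nat.cast_smul_eq_nsmul ℂ,
    smul_smul, one_div, inv_mul_cancel₀ (by exact_mod_cast n.factorial_ne_zero), one_smul]
  rfl

lemma taylorCoeff_eq_of_hasSum {A : ℕ → B} {f : ℂ → B} {r : ℝ} (hr : 0 < r)
    (h : ∀ z ∈ Metric.ball (0 : ℂ) r, HasSum (fun n => z ^ n • A n) (f z)) :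
    taylorCoeff f = A :=
  funext fun n => by rw [(hasFPowerSeriesOnBall_coeffSeries hr h).taylorCoeff_eq, coeff_coeffSeries]

lemma eqOn_ball_iff_of_hasSum {A A' : ℕ → B} {f g : ℂ → B} {r : ℝ} (hr : 0 < r)
    (hf : ∀ z ∈ Metric.ball (0 : ℂ) r, HasSum (fun n => z ^ n • A n) (f z))
    (hg : ∀ z ∈ Metric.ball (0 : ℂ) r, HasSum (fun n => z ^ n • A' n) (g z)) :
    Set.EqOn f g (Metric.ball 0 r) ↔ A = A' := by
  refine ⟨fun hfg => ?_, ?_⟩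
  · have hg' : ∀ z ∈ Metric.ball (0 : ℂ) r, HasSum (fun n => z ^ n • A' n) (f z) :=
      fun z hz => hfg hz ▸ hg z hz
    rw [← taylorCoeff_eq_of_hasSum hr hf, taylorCoeff_eq_of_hasSum hr hg']
  · rintro rfl z hz
    exact (hf z hz).unique (hg z hz)

lemma hasSum_taylorCoeff {f : ℂ → B} {r : ℝ}
    (hf : DifferentiableOn ℂ f (Metric.ball 0 r)) {z : ℂ} (hz : z ∈ Metric.ball 0 r) :
    HasSum (fun n => z ^ n • taylorCoeff f n) (f z) := by
  convert Complex.hasSum_taylorSeries_on_ball hf hz using 2 with n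
  rw [taylorCoeff, sub_zero, smul_comm, one_div]

lemma exists_taylorCoeff_eq_smul_shift {v : ℂ → B} {r : ℝ} (hr : 0 < r)
    (hv : DifferentiableOn ℂ v (Metric.ball 0 r)) {s : ℕ → ℂ} {C : ℝ} (hs : ∀ k, ‖s k‖ ≤ C)
    (N : ℕ) : ∃ u : ℂ → B, DifferentiableOn ℂ u (Metric.ball 0 r) ∧
      ∀ k, taylorCoeff u k = s k • taylorCoeff v (k + N) := by
  set c : ℕ → B := fun k => s k • taylorCoeff v (k + N)
  have hradius : ENNReal.ofReal r ≤ (coeffSeries c).radius :=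
    (hasFPowerSeriesOnBall_coeffSeries hr fun z hz => hasSum_taylorCoeff hv hz).r_le.trans
      (radius_coeffSeries_le_radius_smul_shift _ hs N)
  have hpos : 0 < ENNReal.ofReal r := ENNReal.ofReal_pos.mpr hr
  have hu := ((coeffSeries c).hasFPowerSeriesOnBall (hpos.trans_le hradius)).mono hpos hradius
  refine ⟨(coeffSeries c).sum, by simpa [Metric.eball_ofReal] using hu.differentiableOn,
    fun k => ?_⟩
  rw [hu.taylorCoeff_eq, coeff_coeffSeries]

lemma hasSum_odeOp {M : ℕ} (hM : 1 ≤ M) {u : ℂ → B} {r : ℝ}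
    (hu : DifferentiableOn ℂ u (Metric.ball 0 r)) {z : ℂ} (hz : z ∈ Metric.ball 0 r) :
    HasSum (fun k => z ^ (k + (M - 1)) • (odeWeight M k • taylorCoeff u k)) (odeOp M u z) := by
  obtain ⟨N, rfl⟩ : ∃ N, M = N + 1 := ⟨M - 1, by omega⟩
  have hderiv : HasSum (fun k => z ^ (k + N) • (((k : ℂ) / 2) • taylorCoeff u k))
      ((z ^ (N + 1) / 2) • deriv u z) := by
    rw [← hasSum_nat_add_iff' 1]
    convert (hasSum_taylorCoeff (hu.deriv Metric.isOpen_ball) hz).const_smul (z ^ (N + 1) / 2)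
      using 1
    · funext n
      rw [taylorCoeff_deriv, smul_smul, smul_smul, smul_smul]
      congr 1
      push_cast
      ring
    · simp
  have hvalue : HasSum (fun k => z ^ (k + N) • (((N + 1 : ℕ) : ℂ) / 4) • taylorCoeff u k)
      ((((N + 1 : ℕ) : ℂ) / 4 * z ^ N) • u z) := by
    convert (hasSum_taylorCoeff hu hz).const_smul (((N + 1 : ℕ) : ℂ) / 4 * z ^ N) using 1
    funext k
    rw [smul_smul, smul_smul]
    congr 1
    ring
  convert hderiv.add hvalue using 1
  · funext k
    rw [odeWeight, Nat.add_sub_cancel, ← smul_add, add_smul]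
  · rw [odeOp, Nat.add_sub_cancel]

lemma odeOp_eq_iff {M : ℕ} (hM : 1 ≤ M) {r : ℝ} (hr : 0 < r) {u v : ℂ → B}
    (hu : DifferentiableOn ℂ u (Metric.ball 0 r)) (hv : DifferentiableOn ℂ v (Metric.ball 0 r))
    (E : ℕ → B) :
    (∀ z ∈ Metric.ball (0 : ℂ) r,
        odeOp M u z = (∑ j ∈ Finset.range (M - 1), z ^ j • E j) + v z) ↔
      (∀ j < M - 1, E j = -taylorCoeff v j) ∧
        ∀ k, odeWeight M k • taylorCoeff u k = taylorCoeff v (k + (M - 1)) := by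
  set N := M - 1
  have hlhs : ∀ z ∈ Metric.ball (0 : ℂ) r, HasSum (fun n => z ^ n •
      if n < N then 0 else odeWeight M (n - N) • taylorCoeff u (n - N)) (odeOp M u z) := by
    intro z hz
    rw [← hasSum_nat_add_iff' N,
      Finset.sum_eq_zero fun i hi => by simp [Finset.mem_range.mp hi], sub_zero]
    simpa using hasSum_odeOp hM hu hz
  have hrhs : ∀ z ∈ Metric.ball (0 : ℂ) r, HasSum
      (fun n => z ^ n • ((if n < N then E n else 0) + taylorCoeff v n))
      ((∑ j ∈ Finset.range N, z ^ j • E j) + v z) := by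
    intro z hz
    simp_rw [smul_add]
    refine HasSum.add ?_ (hasSum_taylorCoeff hv hz)
    convert hasSum_sum_of_ne_finset_zero (L := SummationFilter.unconditional ℕ)
      (s := Finset.range N) (f := fun n => z ^ n • if n < N then E n else 0)
      (fun n hn => by simp_all) using 1
    exact Finset.sum_congr rfl fun j hj => by simp_all
  refine (eqOn_ball_iff_of_hasSum hr hlhs hrhs).trans ?_
  simp only [funext_iff]
  constructor
  · intro h
    refine ⟨fun j hj => ?_, fun k => by simpa using h (k + N)⟩
    simpa [hj, eq_neg_iff_add_eq_zero, eq_comm] using h j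
  · rintro ⟨hE, hw⟩ n
    split_ifs with hn
    · simp [hE n hn]
    · rw [hw, Nat.sub_add_cancel (not_lt.mp hn), zero_add]

end

theorem stmt6 {B : Type*} [NormedAddCommGroup B] [NormedSpace ℂ B] [CompleteSpace B]
    (M : ℕ) (hM : 1 ≤ M) (r₀ : ℝ) (hr₀ : 0 < r₀) (v : ℂ → B)
    (hv : DifferentiableOn ℂ v (Metric.ball (0 : ℂ) r₀)) :
    ∃ (u : ℂ → B) (E : ℕ → B),
      -- existence
      (DifferentiableOn ℂ u (Metric.ball (0 : ℂ) r₀) ∧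
        ∀ z ∈ Metric.ball (0 : ℂ) r₀,
          (z ^ M / 2) • deriv u z + ((M : ℂ) / 4 * z ^ (M - 1)) • u z =
            (∑ j ∈ Finset.range (M - 1), z ^ j • E j) + v z) ∧
      -- uniqueness
      (∀ (u₂ : ℂ → B) (E₂ : ℕ → B),
        (DifferentiableOn ℂ u₂ (Metric.ball (0 : ℂ) r₀) ∧
          ∀ z ∈ Metric.ball (0 : ℂ) r₀,
            (z ^ M / 2) • deriv u₂ z + ((M : ℂ) / 4 * z ^ (M - 1)) • u₂ z =
              (∑ j ∈ Finset.range (M - 1), z ^ j • E₂ j) + v z) →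
        (∀ z ∈ Metric.ball (0 : ℂ) r₀, u₂ z = u z) ∧ ∀ j < M - 1, E₂ j = E j) ∧
      -- estimates
      (∀ r : ℝ, 0 < r → r < r₀ →
        (∀ j < M - 1, (‖E j‖₊ : ℝ≥0∞) ≤ bNorm v r / (ENNReal.ofReal r) ^ j) ∧
        bNorm u r ≤ 4 * bNorm v r / (ENNReal.ofReal r) ^ (M - 1) ∧
        bNorm (deriv u) r ≤ 2 * bNorm v r / (ENNReal.ofReal r) ^ M) := by
  obtain ⟨u, hu, huc⟩ :=
    exists_taylorCoeff_eq_smul_shift hr₀ hv (norm_inv_odeWeight_le hM) (M - 1)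
  refine ⟨u, fun j => -taylorCoeff v j, ⟨hu, (odeOp_eq_iff hM hr₀ hu hv _).mpr
    ⟨fun _ _ => rfl, fun k => by rw [huc, smul_inv_smul₀ (odeWeight_ne_zero hM k)]⟩⟩, ?_, ?_⟩
  · rintro u₂ E₂ ⟨hu₂, hsol₂⟩
    obtain ⟨hE₂, hweight₂⟩ := (odeOp_eq_iff hM hr₀ hu₂ hv E₂).mp hsol₂
    have hcoeff : ∀ k, taylorCoeff u₂ k = taylorCoeff u k := fun k => by
      rw [huc, ← inv_smul_smul₀ (odeWeight_ne_zero hM k) (taylorCoeff u₂ k), hweight₂ k]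
    refine ⟨fun z hz => (hasSum_taylorCoeff hu₂ hz).unique ?_, hE₂⟩
    simpa only [hcoeff] using hasSum_taylorCoeff hu hz
  · intro r hr _
    refine ⟨fun j _ => by simpa using norm_taylorCoeff_le_bNorm v hr j, ?_, ?_⟩
    · simpa using bNorm_le_of_taylorCoeff_eq_smul (C := 4) (norm_inv_odeWeight_le hM) huc hr
    · have hderiv : ∀ k, taylorCoeff (deriv u) k =
          (((k + 1 : ℕ) : ℂ) * (odeWeight M (k + 1))⁻¹) • taylorCoeff v (k + M) := fun k => by
        rw [taylorCoeff_deriv, huc, smul_smul, show k + 1 + (M - 1) = k + M by omega]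
      simpa using bNorm_le_of_taylorCoeff_eq_smul (C := 2)
        (fun k => norm_natCast_mul_inv_odeWeight_le M (k + 1)) hderiv hr
end

section
/- For all positive integers j and k with k ≤ j, one has Σ_{j₁+…+j_k = j, j₁,…,j_k ≥ 1} j₁!·j₂!·⋯·j_k! ≤ 4^{k−1}·(j−k+1)!, where the sum runs over all k-tuples of positive integers summing to j. -/
/-!
Subtracting one from every part turns compositions of `j` into `k` positive parts into weak
compositions of `n = j - k`, and `T k n = ∑_{x₁+⋯+x_k = n} ∏ (xᵢ + 1)!` satisfies
`T (k+1) n = ∑_{a+b=n} (a+1)! T k b`. By induction it therefore suffices that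
`∑_{a+b=n} (a+1)! (b+1)! ≤ 4 (n+1)!`: the two extreme terms equal `(n+1)!`, and each of the
`n - 1` interior ones is at most `2 n!` because `(a+2)! (b+2)! ≤ 2 (a+b+2)!`.
-/

open Finset Nat

namespace Finset.Nat

theorem sum_antidiagonalTuple_succ {M : Type*} [AddCommMonoid M] (k n : ℕ)
    (F : (Fin (k + 1) → ℕ) → M) :
    ∑ x ∈ antidiagonalTuple (k + 1) n, F x =
      ∑ p ∈ antidiagonal n, ∑ x ∈ antidiagonalTuple k p.2, F (Fin.cons p.1 x) := by
  simp [antidiagonalTuple, Multiset.Nat.antidiagonalTuple, List.Nat.antidiagonalTuple,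
    HasAntidiagonal.antidiagonal, Multiset.Nat.antidiagonal, List.flatMap_def, List.sum_flatten,
    Function.comp_def]

theorem sum_antidiagonalTuple_succ_prod {R : Type*} [CommSemiring R] (g : ℕ → R) (k n : ℕ) :
    ∑ x ∈ antidiagonalTuple (k + 1) n, ∏ i, g (x i) =
      ∑ p ∈ antidiagonal n, g p.1 * ∑ x ∈ antidiagonalTuple k p.2, ∏ i, g (x i) := by
  simp only [sum_antidiagonalTuple_succ, Fin.prod_univ_succ, Fin.cons_zero, Fin.cons_succ,
    mul_sum]

theorem sum_filter_one_le_antidiagonalTuple {M : Type*} [AddCommMonoid M] {k j : ℕ} (hkj : k ≤ j)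
    (F : (Fin k → ℕ) → M) :
    ∑ f ∈ (antidiagonalTuple k j).filter (fun f => ∀ i, 1 ≤ f i), F f =
      ∑ g ∈ antidiagonalTuple k (j - k), F (g + 1) := by
  have hcancel : ∀ f : Fin k → ℕ, (∀ i, 1 ≤ f i) → f - 1 + 1 = f := fun f hf =>
    funext fun i => Nat.sub_add_cancel (hf i)
  refine sum_nbij' (· - 1) (· + 1) (fun f hf => ?_) (fun g hg => ?_)
    (fun f hf => hcancel f (mem_filter.1 hf).2) (fun g _ => add_tsub_cancel_right g 1)
    (fun f hf => by rw [hcancel f (mem_filter.1 hf).2])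
  · obtain ⟨hsum, hpos⟩ := mem_filter.1 hf
    rw [mem_antidiagonalTuple] at hsum ⊢
    simp only [Pi.sub_apply, Pi.one_apply]
    rw [sum_tsub_distrib _ fun i _ => hpos i, hsum, sum_const, card_univ, Fintype.card_fin,
      smul_eq_mul, mul_one]
  · rw [mem_antidiagonalTuple] at hg
    simp only [mem_filter, mem_antidiagonalTuple, Pi.add_apply, Pi.one_apply, sum_add_distrib, hg,
      sum_const, card_univ, Fintype.card_fin, smul_eq_mul, mul_one]
    exact ⟨Nat.sub_add_cancel hkj, fun _ => le_add_self⟩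

end Finset.Nat

theorem factorial_add_two_mul_factorial_add_two_le (a b : ℕ) :
    (a + 2)! * (b + 2)! ≤ 2 * (a + b + 2)! := by
  induction a with
  | zero => simp [factorial, mul_comm]
  | succ a ih =>
    calc (a + 1 + 2)! * (b + 2)! = (a + 3) * ((a + 2)! * (b + 2)!) := by
          rw [factorial_succ]; ring
      _ ≤ (a + b + 3) * (2 * (a + b + 2)!) := by gcongr; omega
      _ = 2 * (a + 1 + b + 2)! := by
          rw [show a + 1 + b + 2 = (a + b + 2) + 1 by ring, factorial_succ (a + b + 2)]; ring

theorem sum_antidiagonal_factorial_succ_mul_le (n : ℕ) :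
    ∑ p ∈ antidiagonal n, (p.1 + 1)! * (p.2 + 1)! ≤ 4 * (n + 1)! := by
  match n with
  | 0 => simp
  | 1 => decide
  | m + 2 =>
    rw [Finset.Nat.sum_antidiagonal_succ, Finset.Nat.sum_antidiagonal_succ']
    have hinner : ∑ p ∈ antidiagonal m, (p.1 + 2)! * (p.2 + 2)! ≤ (m + 1) * (2 * (m + 2)!) := by
      rw [← Finset.Nat.card_antidiagonal m, ← smul_eq_mul]
      refine sum_le_card_nsmul _ _ _ fun p hp => ?_
      rw [HasAntidiagonal.mem_antidiagonal] at hp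
      simpa [hp] using factorial_add_two_mul_factorial_add_two_le p.1 p.2
    have hfac : (m + 3)! = (m + 3) * (m + 2)! := factorial_succ _
    simp only [factorial_one, zero_add, one_mul, mul_one]
    nlinarith

theorem sum_antidiagonalTuple_prod_factorial_succ_le (k n : ℕ) :
    ∑ x ∈ antidiagonalTuple (k + 1) n, ∏ i, (x i + 1)! ≤ 4 ^ k * (n + 1)! := by
  induction k generalizing n with
  | zero => simp [Finset.Nat.antidiagonalTuple_one]
  | succ k ih =>
    rw [Finset.Nat.sum_antidiagonalTuple_succ_prod (fun m => (m + 1)!)]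
    calc ∑ p ∈ antidiagonal n, (p.1 + 1)! * ∑ x ∈ antidiagonalTuple (k + 1) p.2, ∏ i, (x i + 1)!
        ≤ ∑ p ∈ antidiagonal n, (p.1 + 1)! * (4 ^ k * (p.2 + 1)!) :=
          sum_le_sum fun p _ => Nat.mul_le_mul_left _ (ih p.2)
      _ = 4 ^ k * ∑ p ∈ antidiagonal n, (p.1 + 1)! * (p.2 + 1)! := by
          rw [mul_sum]; exact sum_congr rfl fun _ _ => by ring
      _ ≤ 4 ^ k * (4 * (n + 1)!) := by gcongr; exact sum_antidiagonal_factorial_succ_mul_le n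
      _ = 4 ^ (k + 1) * (n + 1)! := by ring

theorem stmt7 (j k : ℕ) (hk : 1 ≤ k) (hkj : k ≤ j) :
    ∑ f ∈ (Finset.Nat.antidiagonalTuple k j).filter (fun f => ∀ i, 1 ≤ f i),
        ∏ i, (f i).factorial ≤ 4 ^ (k - 1) * (j - k + 1).factorial := by
  obtain ⟨k, rfl⟩ := Nat.exists_eq_add_of_le' hk
  rw [Finset.Nat.sum_filter_one_le_antidiagonalTuple hkj]
  simpa using sum_antidiagonalTuple_prod_factorial_succ_le k (j - (k + 1))
end

section
/- Let (X_s)_{0<s≤1} and (Y_s)_{0<s≤1} be scales of Banach spaces equipped with an operator h of size τ > 0. Let a ≥ 1 be an integer and B, C', C'' constants with C'' ≥ 1, and let C ≥ max{1, 36·a^{a−2}·B·C''·e^a}. Suppose given: (i) h-linear operators F_{n,s} : X_s → Y_s (n ≥ 0), compatible with inclusions, with ‖F_{n,s}‖ ≤ C'·Cⁿ·n!/(1−s)ⁿ; (ii) for all 0 < s < s' < 1 and n ≥ 0, h-linear operators G_{n,s',s} : Y_{s'} → X_s, compatible with inclusions, with ‖G_{n,s',s}‖ ≤ (B/(s'−s)^a)·Cⁿ·n!/(1−s')ⁿ,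 such that for all N ≥ 0 and s < s', Σ_{j+m=N, j,m≥0} F_{j,s} ∘ G_{m,s',s} equals 0 if N ≥ 1 and equals the inclusion Y_{s'} ↪ Y_s if N = 0; (iii) h-linear operators H_{n,s} : X_s → Y_s (n ≥ 0), compatible with inclusions, with ‖H_{n,s}‖ ≤ C''·Cⁿ·n!/(1−s)ⁿ; (iv) elements v_n = (v_{n,s}) ∈ Ẏ₁ (n ≥ 0) with ‖v_{n,s}‖ ≤ Cⁿ·n!/(1−s)ⁿ. Then there exist u_n = (u_{n,s}) ∈ X̊₁ (n ≥ 0) with ‖u_{n,s}‖ ≤ C^{n+a+1}·(n+a+1)!/(1−s)^{n+a+1} such that, for every s with τC/(1−s) < 1, the operator series F_s = Σ_{n≥0} hⁿ F_{n,s} and H_s = Σ_{n≥0} hⁿ H_{n,s} converge in operator norm, the series v = Σ_{n≥0} hⁿ v_{n,s} ∈ Y_s and u = Σ_{n≥0} hⁿ u_{n,s} ∈ X_s converge absolutely, and (F_s + h^a·H_s)(u) = v in Y_s. -/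
/-!
Put `w_k = v_k - ∑_{j+m=k-a} H_j u_m` and `u_n = ∑_{k ≤ n} G_{n-k} w_k`; since `a ≥ 1` this is a
recursion, and `∑_{j+m=N} F_j G_m = δ_{N,0}` turns it into the coefficient identity
`∑_{j+m=N} F_j u_m + ∑_{j+m=N-a} H_j u_m = v_N`. At step `n` the operators `G` are taken between
`s` and `t = s + (1-s)/(n+2)`: this costs `(n+2)^a / (1-s)^a` and `((n+2)/(n+1))^(n+1) ≤ e`, and,
with `∑_j j! (N-j)! ≤ 3 N!`, the loss is absorbed by `C^a (n+a+1)!/(n+1)!`, which gives the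
Gevrey bound on `u_n` by induction. For `τ C/(1-s) < 1` all series converge absolutely, and since
the operators commute with `h`, Cauchy products turn the coefficient identity into
`(F_s + h^a H_s) u = v`.
-/

open Finset
open scoped Nat

lemma Nat.factorial_mul_factorial_sub_le_factorial_pred {j N : ℕ} (hj : 1 ≤ j) (hjN : j < N) :
    j ! * (N - j)! ≤ (N - 1)! := by
  induction j, hj using Nat.le_induction generalizing N with
  | base => simp
  | succ j hj ih =>
    obtain ⟨M, rfl⟩ : ∃ M, N = M + 1 := ⟨N - 1, by omega⟩
    calc (j + 1)! * (M + 1 - (j + 1))! = (j + 1) * (j ! * (M - j)!) := by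
          rw [Nat.factorial_succ, Nat.add_sub_add_right, mul_assoc]
      _ ≤ M * (M - 1)! := Nat.mul_le_mul (by omega) (ih (by omega))
      _ = (M + 1 - 1)! := by
          obtain ⟨L, rfl⟩ : ∃ L, M = L + 1 := ⟨M - 1, by omega⟩
          simp [Nat.factorial_succ]

lemma Nat.sum_range_factorial_mul_factorial_sub_le (N : ℕ) :
    ∑ j ∈ range (N + 1), j ! * (N - j)! ≤ 3 * N ! := by
  obtain hN | ⟨M, rfl⟩ : N < 2 ∨ ∃ M, N = M + 2 := by
    rcases Nat.lt_or_ge N 2 with h | h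
    · exact .inl h
    · exact .inr ⟨N - 2, by omega⟩
  · interval_cases N <;> decide
  rw [sum_range_succ, sum_range_succ']
  have hmid : ∑ i ∈ range (M + 1), (i + 1)! * (M + 2 - (i + 1))! ≤ (M + 1) * (M + 1)! := by
    simpa using sum_le_sum fun i (hi : i ∈ range (M + 1)) =>
      Nat.factorial_mul_factorial_sub_le_factorial_pred (j := i + 1) (N := M + 2) (by omega)
        (by simp at hi; omega)
  have hpred : (M + 1) * (M + 1)! ≤ (M + 2)! := by
    rw [Nat.factorial_succ (M + 1)]; exact Nat.mul_le_mul_right _ (by omega)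
  simp only [Nat.factorial_zero, Nat.sub_self, Nat.sub_zero, one_mul, mul_one]
  omega

noncomputable def gevreyWeight (C r : ℝ) (n : ℕ) : ℝ := C ^ n * n ! / r ^ n

section GevreyWeight

variable {C r : ℝ}

lemma mul_gevreyWeight (K : ℝ) (n : ℕ) : K * gevreyWeight C r n = K * C ^ n * n ! / r ^ n := by
  unfold gevreyWeight; ring

lemma gevreyWeight_nonneg (hC : 0 ≤ C) (hr : 0 ≤ r) (n : ℕ) : 0 ≤ gevreyWeight C r n := by
  unfold gevreyWeight; positivity

lemma gevreyWeight_le_succ (hC : 1 ≤ C) (hr₀ : 0 < r) (hr₁ : r ≤ 1) (n : ℕ) :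
    gevreyWeight C r n ≤ gevreyWeight C r (n + 1) := by
  unfold gevreyWeight
  refine div_le_div₀ (by positivity) ?_ (by positivity) (pow_le_pow_of_le_one hr₀.le hr₁ n.le_succ)
  gcongr <;> omega

lemma gevreyWeight_mul_gevreyWeight (hr : r ≠ 0) {i j : ℕ} :
    gevreyWeight C r i * gevreyWeight C r j = C ^ (i + j) / r ^ (i + j) * (i ! * j ! : ℕ) := by
  unfold gevreyWeight
  push_cast
  rw [pow_add, pow_add]
  field_simp

lemma sum_antidiagonal_gevreyWeight_mul_le (hC : 0 ≤ C) (hr : 0 < r) (M d : ℕ) :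
    ∑ p ∈ antidiagonal M, gevreyWeight C r p.1 * gevreyWeight C r (p.2 + d)
      ≤ 3 * gevreyWeight C r (M + d) := by
  rw [Nat.sum_antidiagonal_eq_sum_range_succ (fun i j => gevreyWeight C r i * gevreyWeight C r (j + d))]
  have hterm : ∀ k ∈ range (M + 1), gevreyWeight C r k * gevreyWeight C r (M - k + d)
      = C ^ (M + d) / r ^ (M + d) * (k ! * (M + d - k)! : ℕ) := by
    intro k hk
    have hk : k ≤ M := Nat.lt_succ_iff.mp (mem_range.mp hk)
    rw [gevreyWeight_mul_gevreyWeight hr.ne', show k + (M - k + d) = M + d by omega,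
      show M - k + d = M + d - k by omega]
  rw [sum_congr rfl hterm, ← mul_sum]
  calc C ^ (M + d) / r ^ (M + d) * ∑ k ∈ range (M + 1), ((k ! * (M + d - k)! : ℕ) : ℝ)
      ≤ C ^ (M + d) / r ^ (M + d) * ∑ k ∈ range (M + d + 1), ((k ! * (M + d - k)! : ℕ) : ℝ) := by
        refine mul_le_mul_of_nonneg_left (sum_le_sum_of_subset_of_nonneg
          (range_subset_range.mpr (by omega)) fun _ _ _ => by positivity) (by positivity)
    _ ≤ C ^ (M + d) / r ^ (M + d) * (3 * (M + d)! : ℕ) := by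
        gcongr
        exact_mod_cast Nat.sum_range_factorial_mul_factorial_sub_le (M + d)
    _ = 3 * gevreyWeight C r (M + d) := by
        unfold gevreyWeight; push_cast; ring

lemma pow_div_factorial_mul_gevreyWeight (hr : r ≠ 0) (τ : ℝ) (n b : ℕ) :
    τ ^ n / n ! * gevreyWeight C r (n + b)
      = (C / r) ^ b * ((n + b).descFactorial b * (τ * C / r) ^ n) := by
  have hfac : ((n + b)! : ℝ) = n ! * (n + b).descFactorial b := by
    have h := Nat.factorial_mul_descFactorial (Nat.le_add_left b n)
    rw [Nat.add_sub_cancel] at h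
    exact_mod_cast h.symm
  unfold gevreyWeight
  rw [hfac, div_pow, div_pow, mul_pow, pow_add, pow_add]
  field_simp

lemma summable_pow_div_factorial_mul_gevreyWeight {τ : ℝ} (hτ : 0 ≤ τ) (hC : 0 ≤ C)
    (hr : 0 < r) (hq : τ * C / r < 1) (b : ℕ) :
    Summable fun n => τ ^ n / n ! * gevreyWeight C r (n + b) := by
  have hq' : ‖τ * C / r‖ < 1 := by rwa [Real.norm_of_nonneg (by positivity)]
  exact ((summable_descFactorial_mul_geometric_of_norm_lt_one b hq').mul_left ((C / r) ^ b)).congr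
    fun n => (pow_div_factorial_mul_gevreyWeight hr.ne' τ n b).symm

lemma add_two_div_add_one_pow_le_exp_one (n : ℕ) : (((n : ℝ) + 2) / (n + 1)) ^ (n + 1) ≤ Real.exp 1 := by
  have h := Real.one_add_inv_pow_le_exp (n := n + 1)
  convert h using 2
  push_cast
  field_simp
  ring

lemma div_pow_mul_gevreyWeight_le {K : ℝ} {a : ℕ} (hK : 0 ≤ K) (hKC : K * Real.exp 1 ≤ C ^ a)
    (hC : 0 ≤ C) (hr : 0 < r) (n : ℕ) :
    K / (r / (n + 2)) ^ a * gevreyWeight C (r * ((n + 1) / (n + 2))) (n + 1)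
      ≤ gevreyWeight C r (n + a + 1) := by
  have hfac : ((n + 2 : ℝ)) ^ a * (n + 1)! ≤ (n + a + 1)! := by
    have h := Nat.factorial_mul_pow_le_factorial (m := n + 1) (n := a)
    rw [show n + 1 + a = n + a + 1 by omega] at h
    calc ((n + 2 : ℝ)) ^ a * (n + 1)! = ((n + 1)! * (n + 1 + 1) ^ a : ℕ) := by push_cast; ring
      _ ≤ (n + a + 1)! := by exact_mod_cast h
  calc K / (r / (n + 2)) ^ a * gevreyWeight C (r * ((n + 1) / (n + 2))) (n + 1)
      = K * (((n : ℝ) + 2) / (n + 1)) ^ (n + 1) * ((n + 2 : ℝ) ^ a * (n + 1)!)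
          * C ^ (n + 1) / r ^ (n + a + 1) := by
        unfold gevreyWeight
        rw [show n + a + 1 = a + (n + 1) by omega, pow_add, div_pow, mul_pow, div_pow, div_pow]
        field_simp
        ring
    _ ≤ K * Real.exp 1 * (n + a + 1)! * C ^ (n + 1) / r ^ (n + a + 1) := by
        gcongr
        exact add_two_div_add_one_pow_le_exp_one n
    _ ≤ C ^ a * (n + a + 1)! * C ^ (n + 1) / r ^ (n + a + 1) := by gcongr
    _ = gevreyWeight C r (n + a + 1) := by
        unfold gevreyWeight
        rw [show n + a + 1 = a + (n + 1) by omega, pow_add]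
        ring

end GevreyWeight

section OperatorSeries

variable {E F : Type*} [NormedAddCommGroup E] [NormedSpace ℝ E]
  [NormedAddCommGroup F] [NormedSpace ℝ F]

lemma norm_pow_apply_le {T : E →L[ℝ] E} {τ : ℝ}
    (hT : ∀ n : ℕ, 1 ≤ n → ∀ x : E, ‖(T ^ n) x‖ ≤ τ ^ n / n ! * ‖x‖) (n : ℕ) (x : E) :
    ‖(T ^ n) x‖ ≤ τ ^ n / n ! * ‖x‖ := by
  rcases Nat.eq_zero_or_pos n with rfl | hn
  · simp
  · exact hT n hn x

lemma norm_pow_comp_le {T : F →L[ℝ] F} {τ : ℝ} (hτ : 0 ≤ τ)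
    (hT : ∀ n : ℕ, 1 ≤ n → ∀ y : F, ‖(T ^ n) y‖ ≤ τ ^ n / n ! * ‖y‖) (n : ℕ) (A : E →L[ℝ] F) :
    ‖(T ^ n).comp A‖ ≤ τ ^ n / n ! * ‖A‖ :=
  (T ^ n).comp A |>.opNorm_le_bound (by positivity) fun x =>
    (norm_pow_apply_le hT n (A x)).trans <| by
      rw [mul_assoc]; gcongr; exact A.le_opNorm x

lemma summable_of_norm_le_pow_div_factorial_mul {G : Type*} [SeminormedAddCommGroup G]
    {y : ℕ → G} {C r τ K : ℝ} {b : ℕ} (hτ : 0 ≤ τ) (hC : 0 ≤ C) (hr : 0 < r)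
    (hq : τ * C / r < 1) (hy : ∀ n, ‖y n‖ ≤ τ ^ n / n ! * (K * gevreyWeight C r (n + b))) :
    Summable fun n => ‖y n‖ :=
  .of_nonneg_of_le (fun _ => norm_nonneg _) (fun n => (hy n).trans_eq (by ring))
    ((summable_pow_div_factorial_mul_gevreyWeight hτ hC hr hq b).mul_left K)

lemma summable_norm_pow_comp {T : F →L[ℝ] F} {C r τ K : ℝ} (hτ : 0 ≤ τ)
    (hT : ∀ n : ℕ, 1 ≤ n → ∀ y : F, ‖(T ^ n) y‖ ≤ τ ^ n / n ! * ‖y‖) (hC : 0 ≤ C) (hr : 0 < r)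
    (hq : τ * C / r < 1) {A : ℕ → E →L[ℝ] F} (hA : ∀ n, ‖A n‖ ≤ K * gevreyWeight C r n) :
    Summable fun n => ‖(T ^ n).comp (A n)‖ :=
  summable_of_norm_le_pow_div_factorial_mul (b := 0) hτ hC hr hq fun n =>
    (norm_pow_comp_le hτ hT n (A n)).trans (by gcongr; exact hA n)

lemma summable_norm_pow_apply {T : E →L[ℝ] E} {C r τ : ℝ} (hτ : 0 ≤ τ)
    (hT : ∀ n : ℕ, 1 ≤ n → ∀ x : E, ‖(T ^ n) x‖ ≤ τ ^ n / n ! * ‖x‖) (hC : 0 ≤ C) (hr : 0 < r)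
    (hq : τ * C / r < 1) {x : ℕ → E} {b : ℕ} (hx : ∀ n, ‖x n‖ ≤ gevreyWeight C r (n + b)) :
    Summable fun n => ‖(T ^ n) (x n)‖ :=
  summable_of_norm_le_pow_div_factorial_mul (K := 1) hτ hC hr hq fun n =>
    (norm_pow_apply_le hT n (x n)).trans (by rw [one_mul]; gcongr; exact hx n)

lemma pow_apply_comm {S : E →L[ℝ] E} {T : F →L[ℝ] F} {A : E →L[ℝ] F}
    (h : A.comp S = T.comp A) (n : ℕ) (x : E) : A ((S ^ n) x) = (T ^ n) (A x) := by
  have hA : Function.Semiconj A S T := fun x => congr($h x)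
  simpa [FunLike.coe_pow_eq_iterate] using hA.iterate_right n x

lemma hasSum_sum_antidiagonal_apply [CompleteSpace E] [CompleteSpace F]
    {f : ℕ → E →L[ℝ] F} {x : ℕ → E} (hf : Summable fun j => ‖f j‖)
    (hx : Summable fun m => ‖x m‖) :
    HasSum (fun N => ∑ p ∈ antidiagonal N, f p.1 (x p.2)) ((∑' j, f j) (∑' m, x m)) := by
  have hprod : Summable fun p : ℕ × ℕ => ‖f p.1 (x p.2)‖ :=
    .of_nonneg_of_le (fun _ => norm_nonneg _) (fun p => (f p.1).le_opNorm (x p.2))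
      (hf.mul_of_nonneg hx (fun _ => norm_nonneg _) fun _ => norm_nonneg _)
  obtain ⟨S, hS⟩ := hprod.of_norm
  have hrows : HasSum (fun j => f j (∑' m, x m)) ((∑' j, f j) (∑' m, x m)) :=
    (ContinuousLinearMap.apply ℝ F (∑' m, x m)).hasSum hf.of_norm.hasSum
  have hS' : S = (∑' j, f j) (∑' m, x m) :=
    (hS.prod_fiberwise fun j => (f j).hasSum hx.of_norm.hasSum).unique hrows
  subst hS'
  exact ((HasAntidiagonal.sigmaAntidiagonalEquivProd (A := ℕ)).hasSum_iff.mpr hS).sigma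
    fun N => Finset.hasSum _ _

variable [CompleteSpace E] [CompleteSpace F] {S : E →L[ℝ] E} {T : F →L[ℝ] F} {u : ℕ → E}

lemma hasSum_pow_sum_antidiagonal_apply {A : ℕ → E →L[ℝ] F}
    (hAS : ∀ n, (A n).comp S = T.comp (A n)) (hA : Summable fun n => ‖(T ^ n).comp (A n)‖)
    (hu : Summable fun n => ‖(S ^ n) (u n)‖) :
    HasSum (fun N => (T ^ N) (∑ p ∈ antidiagonal N, A p.1 (u p.2)))
      ((∑' n, (T ^ n).comp (A n)) (∑' n, (S ^ n) (u n))) := by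
  convert hasSum_sum_antidiagonal_apply hA hu using 2 with N
  rw [map_sum]
  refine sum_congr rfl fun p hp => ?_
  rw [ContinuousLinearMap.comp_apply, pow_apply_comm (hAS p.1), ← mem_antidiagonal.mp hp, pow_add]
  rfl

lemma hasSum_pow_apply_of_coeff_eq {Fo Ho : ℕ → E →L[ℝ] F} {v : ℕ → F} (a : ℕ)
    (hFS : ∀ n, (Fo n).comp S = T.comp (Fo n)) (hHS : ∀ n, (Ho n).comp S = T.comp (Ho n))
    (hF : Summable fun n => ‖(T ^ n).comp (Fo n)‖) (hH : Summable fun n => ‖(T ^ n).comp (Ho n)‖)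
    (hu : Summable fun n => ‖(S ^ n) (u n)‖)
    (hcoeff : ∀ N, (∑ p ∈ antidiagonal N, Fo p.1 (u p.2)) +
      (if a ≤ N then ∑ p ∈ antidiagonal (N - a), Ho p.1 (u p.2) else 0) = v N) :
    HasSum (fun n => (T ^ n) (v n))
      ((∑' n, (T ^ n).comp (Fo n)) (∑' n, (S ^ n) (u n)) +
        (T ^ a) ((∑' n, (T ^ n).comp (Ho n)) (∑' n, (S ^ n) (u n)))) := by
  have hHshift : HasSum
      (fun N => (T ^ N) (if a ≤ N then ∑ p ∈ antidiagonal (N - a), Ho p.1 (u p.2) else 0))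
      ((T ^ a) ((∑' n, (T ^ n).comp (Ho n)) (∑' n, (S ^ n) (u n)))) := by
    rw [← hasSum_nat_add_iff' a]
    convert (T ^ a).hasSum (hasSum_pow_sum_antidiagonal_apply hHS hH hu) using 1
    · funext N
      rw [if_pos (Nat.le_add_left a N), Nat.add_sub_cancel, add_comm, pow_add]
      rfl
    · rw [sum_eq_zero fun N hN => by rw [if_neg (by simpa using hN), map_zero], sub_zero]
  convert (hasSum_pow_sum_antidiagonal_apply hFS hF hu).add hHshift using 2 with N
  rw [← map_add, hcoeff]

end OperatorSeries

noncomputable def midScale (n : ℕ) (s : ℝ) : ℝ := s + (1 - s) / (n + 2)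

section MidScale

variable {s : ℝ}

lemma midScale_sub (n : ℕ) (s : ℝ) : midScale n s - s = (1 - s) / (n + 2) := by
  unfold midScale; ring

lemma one_sub_midScale (n : ℕ) (s : ℝ) : 1 - midScale n s = (1 - s) * ((n + 1) / (n + 2)) := by
  unfold midScale; field_simp; ring

lemma lt_midScale (n : ℕ) (hs : s < 1) : s < midScale n s := by
  have : 0 < (1 - s) / (n + 2) := div_pos (by linarith) (by positivity)
  unfold midScale
  linarith

lemma midScale_lt_one (n : ℕ) (hs : s < 1) : midScale n s < 1 := by
  have h := one_sub_midScale n s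
  have : 0 < (1 - s) * ((n + 1) / (n + 2)) := by apply mul_pos <;> positivity
  linarith

lemma midScale_mono (n : ℕ) {s' : ℝ} (h : s' ≤ s) : midScale n s' ≤ midScale n s := by
  have key : ∀ x : ℝ, midScale n x = (x * (n + 1) + 1) / (n + 2) := fun x => by
    unfold midScale; field_simp; ring
  rw [key, key]
  gcongr

lemma midScale_anti (hs : s < 1) {m n : ℕ} (h : m ≤ n) : midScale n s ≤ midScale m s := by
  unfold midScale
  gcongr

end MidScale

/-- Membership in the inductive limit `X̊₁` of a scale. -/
def IsCompatibleFamily {Z : ℝ → Type*} [∀ s, NormedAddCommGroup (Z s)] [∀ s, NormedSpace ℝ (Z s)]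
    (inc : ∀ s' s : ℝ, Z s →L[ℝ] Z s') (z : ∀ s : ℝ, Z s) : Prop :=
  ∀ s' s : ℝ, 0 < s' → s' ≤ s → s < 1 → inc s' s (z s) = z s'

section Construction

variable {X Y : ℝ → Type*}
  [∀ s, NormedAddCommGroup (X s)] [∀ s, NormedSpace ℝ (X s)]
  [∀ s, NormedAddCommGroup (Y s)] [∀ s, NormedSpace ℝ (Y s)]
  (a : ℕ) (Gop : ℕ → ∀ s' s : ℝ, Y s' →L[ℝ] X s) (Hop : ℕ → ∀ s : ℝ, X s →L[ℝ] Y s)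
  (v : ℕ → ∀ s : ℝ, Y s)

noncomputable def rhsCoeff (u : ℕ → ∀ s : ℝ, X s) (k : ℕ) (t : ℝ) : Y t :=
  v k t - if a ≤ k then ∑ p ∈ antidiagonal (k - a), Hop p.1 t (u p.2 t) else 0

/-- The guard `p.2 < n` only serves the termination proof; it always holds when `1 ≤ a`. -/
noncomputable def solCoeff : ℕ → ∀ s : ℝ, X s
  | n, s =>
    let t := midScale n s
    ∑ k ∈ range (n + 1), Gop (n - k) t s (v k t - if a ≤ k then ∑ p ∈ antidiagonal (k - a),
      (if p.2 < n then Hop p.1 t (solCoeff p.2 t) else (0 : Y t)) else 0)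

lemma solCoeff_eq (ha : 1 ≤ a) (n : ℕ) (s : ℝ) :
    solCoeff a Gop Hop v n s = ∑ k ∈ range (n + 1), Gop (n - k) (midScale n s) s
      (rhsCoeff a Hop v (solCoeff a Gop Hop v) k (midScale n s)) := by
  rw [solCoeff]
  refine sum_congr rfl fun k hk => ?_
  unfold rhsCoeff
  by_cases hak : a ≤ k
  · rw [if_pos hak, if_pos hak]
    congr 2
    refine sum_congr rfl fun p hp => ?_
    have := mem_antidiagonal.mp hp
    have := mem_range.mp hk
    rw [if_pos (by omega)]
  · rw [if_neg hak, if_neg hak]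

variable {incX : ∀ s' s : ℝ, X s →L[ℝ] X s'} {incY : ∀ s' s : ℝ, Y s →L[ℝ] Y s'}
  {a Gop Hop v}

lemma rhsCoeff_compatible
    (hHop_inc : ∀ (n : ℕ) (s' s : ℝ), 0 < s' → s' ≤ s → s ≤ 1 →
      (incY s' s).comp (Hop n s) = (Hop n s').comp (incX s' s))
    (hv_inc : ∀ n, IsCompatibleFamily incY (v n)) {u : ℕ → ∀ s : ℝ, X s} {k : ℕ}
    (hu : ∀ m, m + a ≤ k → IsCompatibleFamily incX (u m)) :
    IsCompatibleFamily incY (rhsCoeff a Hop v u k) := by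
  intro s' s hs' hss hs
  unfold rhsCoeff
  rw [map_sub, hv_inc k s' s hs' hss hs]
  split_ifs with hak
  · rw [map_sum]
    congr 1
    refine sum_congr rfl fun p hp => ?_
    have := mem_antidiagonal.mp hp
    rw [← ContinuousLinearMap.comp_apply, hHop_inc p.1 s' s hs' hss hs.le,
      ContinuousLinearMap.comp_apply, hu p.2 (by omega) s' s hs' hss hs]
  · rw [map_zero]

lemma solCoeff_compatible (ha : 1 ≤ a)
    (hGop_incX : ∀ (n : ℕ) (s₂ s s' : ℝ), 0 < s₂ → s₂ ≤ s → s < s' → s' < 1 →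
      (incX s₂ s).comp (Gop n s' s) = Gop n s' s₂)
    (hGop_incY : ∀ (n : ℕ) (s s' s'' : ℝ), 0 < s → s < s' → s' ≤ s'' → s'' < 1 →
      (Gop n s' s).comp (incY s' s'') = Gop n s'' s)
    (hHop_inc : ∀ (n : ℕ) (s' s : ℝ), 0 < s' → s' ≤ s → s ≤ 1 →
      (incY s' s).comp (Hop n s) = (Hop n s').comp (incX s' s))
    (hv_inc : ∀ n, IsCompatibleFamily incY (v n)) (n : ℕ) :
    IsCompatibleFamily incX (solCoeff a Gop Hop v n) := by
  induction n using Nat.strong_induction_on with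
  | _ n ih =>
  intro s' s hs' hss hs
  have hs'1 : s' < 1 := hss.trans_lt hs
  rw [solCoeff_eq a Gop Hop v ha n s, solCoeff_eq a Gop Hop v ha n s', map_sum]
  refine sum_congr rfl fun k hk => ?_
  have hw := rhsCoeff_compatible hHop_inc hv_inc (a := a) (u := solCoeff a Gop Hop v) (k := k)
    fun m hm => ih m (by have := mem_range.mp hk; omega)
  rw [← ContinuousLinearMap.comp_apply,
    hGop_incX _ s' s _ hs' hss (lt_midScale n hs) (midScale_lt_one n hs),
    ← hw _ _ (hs'.trans (lt_midScale n hs'1)) (midScale_mono n hss) (midScale_lt_one n hs),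
    ← ContinuousLinearMap.comp_apply,
    hGop_incY _ s' _ _ hs' (lt_midScale n hs'1) (midScale_mono n hss) (midScale_lt_one n hs)]

lemma solCoeff_eq_sum_of_le (ha : 1 ≤ a)
    (hGop_incY : ∀ (n : ℕ) (s s' s'' : ℝ), 0 < s → s < s' → s' ≤ s'' → s'' < 1 →
      (Gop n s' s).comp (incY s' s'') = Gop n s'' s)
    (hw : ∀ k, IsCompatibleFamily incY (rhsCoeff a Hop v (solCoeff a Gop Hop v) k))
    {n : ℕ} {s t : ℝ} (hs : 0 < s) (hs₁ : s < 1) (hst : s < t) (ht : t ≤ midScale n s) :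
    solCoeff a Gop Hop v n s = ∑ k ∈ range (n + 1),
      Gop (n - k) t s (rhsCoeff a Hop v (solCoeff a Gop Hop v) k t) := by
  rw [solCoeff_eq a Gop Hop v ha]
  refine sum_congr rfl fun k _ => ?_
  rw [← hw k t _ (hs.trans hst) ht (midScale_lt_one n hs₁), ← ContinuousLinearMap.comp_apply,
    hGop_incY _ s t _ hs hst ht (midScale_lt_one n hs₁)]

lemma sum_antidiagonal_apply_solCoeff_add_eq (ha : 1 ≤ a) {Fop : ℕ → ∀ s : ℝ, X s →L[ℝ] Y s}
    (hGop_incY : ∀ (n : ℕ) (s s' s'' : ℝ), 0 < s → s < s' → s' ≤ s'' → s'' < 1 →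
      (Gop n s' s).comp (incY s' s'') = Gop n s'' s)
    (hFG : ∀ (N : ℕ) (s s' : ℝ), 0 < s → s < s' → s' < 1 →
      (∑ p ∈ antidiagonal N, (Fop p.1 s).comp (Gop p.2 s' s)) =
        if N = 0 then incY s s' else 0)
    (hw : ∀ k, IsCompatibleFamily incY (rhsCoeff a Hop v (solCoeff a Gop Hop v) k))
    (N : ℕ) {s : ℝ} (hs : 0 < s) (hs₁ : s < 1) :
    (∑ p ∈ antidiagonal N, Fop p.1 s (solCoeff a Gop Hop v p.2 s)) +
      (if a ≤ N then ∑ p ∈ antidiagonal (N - a), Hop p.1 s (solCoeff a Gop Hop v p.2 s) else 0)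
      = v N s := by
  set w := rhsCoeff a Hop v (solCoeff a Gop Hop v)
  set t := midScale N s
  have hst : s < t := lt_midScale N hs₁
  have ht₁ : t < 1 := midScale_lt_one N hs₁
  suffices ∑ p ∈ antidiagonal N, Fop p.1 s (solCoeff a Gop Hop v p.2 s) = w N s by
    rw [this]; exact sub_add_cancel _ _
  calc ∑ p ∈ antidiagonal N, Fop p.1 s (solCoeff a Gop Hop v p.2 s)
      = ∑ j ∈ range (N + 1), ∑ k ∈ range (N - j + 1), Fop j s (Gop (N - j - k) t s (w k t)) := by
        rw [Nat.sum_antidiagonal_eq_sum_range_succ_mk]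
        refine sum_congr rfl fun j hj => ?_
        rw [solCoeff_eq_sum_of_le ha hGop_incY hw hs hs₁ hst
          (midScale_anti hs₁ (Nat.sub_le N j)), map_sum]
    _ = ∑ k ∈ range (N + 1), ∑ j ∈ range (N - k + 1), Fop j s (Gop (N - j - k) t s (w k t)) :=
        sum_comm' fun j k => by simp only [mem_range]; omega
    _ = ∑ k ∈ range (N + 1), (if N - k = 0 then incY s t else 0) (w k t) := by
        refine sum_congr rfl fun k _ => ?_
        rw [← hFG (N - k) s t hs hst ht₁, _root_.sum_apply,
          Nat.sum_antidiagonal_eq_sum_range_succ_mk]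
        refine sum_congr rfl fun j _ => ?_
        rw [Nat.sub_right_comm]
        rfl
    _ = incY s t (w N t) := by
        rw [sum_eq_single N (fun k hk hkN => by
          rw [if_neg (by have := mem_range.mp hk; omega)]; rfl) (by simp)]
        simp
    _ = w N s := hw N s t hs hst.le ht₁

lemma norm_rhsCoeff_le {C C'' t : ℝ} (hC : 1 ≤ C) (hC'' : 1 ≤ C'') (ht₀ : 0 ≤ t) (ht₁ : t < 1)
    (hH : ∀ n, ‖Hop n t‖ ≤ C'' * gevreyWeight C (1 - t) n)
    {u : ℕ → ∀ s : ℝ, X s} {k : ℕ} (hv : ‖v k t‖ ≤ gevreyWeight C (1 - t) k)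
    (hu : ∀ m, m + a ≤ k → ‖u m t‖ ≤ gevreyWeight C (1 - t) (m + a + 1)) :
    ‖rhsCoeff a Hop v u k t‖ ≤ 4 * C'' * gevreyWeight C (1 - t) (k + 1) := by
  have hr₀ : 0 < 1 - t := by linarith
  have hg : ∀ n, 0 ≤ gevreyWeight C (1 - t) n := gevreyWeight_nonneg (by linarith) hr₀.le
  have hvk : ‖v k t‖ ≤ C'' * gevreyWeight C (1 - t) (k + 1) :=
    hv.trans <| (gevreyWeight_le_succ hC hr₀ (by linarith) k).trans <|
      le_mul_of_one_le_left (hg _) hC''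
  unfold rhsCoeff
  split_ifs with hak
  · have hsum : ‖∑ p ∈ antidiagonal (k - a), Hop p.1 t (u p.2 t)‖
        ≤ 3 * C'' * gevreyWeight C (1 - t) (k + 1) :=
      calc ‖∑ p ∈ antidiagonal (k - a), Hop p.1 t (u p.2 t)‖
          ≤ ∑ p ∈ antidiagonal (k - a),
              C'' * gevreyWeight C (1 - t) p.1 * gevreyWeight C (1 - t) (p.2 + (a + 1)) := by
            refine norm_sum_le_of_le _ fun p hp => ?_
            have := mem_antidiagonal.mp hp
            exact ((Hop p.1 t).le_opNorm _).trans <|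
              mul_le_mul (hH p.1) (hu p.2 (by omega)) (norm_nonneg _) (by have := hg p.1; positivity)
        _ ≤ C'' * (3 * gevreyWeight C (1 - t) (k - a + (a + 1))) := by
            simp_rw [mul_assoc, ← mul_sum]
            gcongr
            exact sum_antidiagonal_gevreyWeight_mul_le (by linarith) hr₀ _ _
        _ = 3 * C'' * gevreyWeight C (1 - t) (k + 1) := by
            rw [show k - a + (a + 1) = k + 1 by omega]; ring
    calc _ ≤ ‖v k t‖ + ‖∑ p ∈ antidiagonal (k - a), Hop p.1 t (u p.2 t)‖ := norm_sub_le _ _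
      _ ≤ 4 * C'' * gevreyWeight C (1 - t) (k + 1) := by linarith
  · rw [sub_zero]
    have := hg (k + 1)
    nlinarith

lemma norm_solCoeff_le (ha : 1 ≤ a) {B C C'' : ℝ} (hC : 1 ≤ C) (hC'' : 1 ≤ C'') (hB : 0 ≤ B)
    (hBC : 12 * B * C'' * Real.exp 1 ≤ C ^ a)
    (hG : ∀ (n : ℕ) (s s' : ℝ), 0 < s → s < s' → s' < 1 →
      ‖Gop n s' s‖ ≤ B / (s' - s) ^ a * gevreyWeight C (1 - s') n)
    (hH : ∀ (n : ℕ) (s : ℝ), 0 < s → s < 1 → ‖Hop n s‖ ≤ C'' * gevreyWeight C (1 - s) n)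
    (hv : ∀ (n : ℕ) (s : ℝ), 0 < s → s < 1 → ‖v n s‖ ≤ gevreyWeight C (1 - s) n)
    (n : ℕ) {s : ℝ} (hs : 0 < s) (hs₁ : s < 1) :
    ‖solCoeff a Gop Hop v n s‖ ≤ gevreyWeight C (1 - s) (n + a + 1) := by
  induction n using Nat.strong_induction_on generalizing s with
  | _ n ih =>
  set t := midScale n s
  have hst : s < t := lt_midScale n hs₁
  have ht₁ : t < 1 := midScale_lt_one n hs₁
  have hw : ∀ k ∈ range (n + 1), ‖rhsCoeff a Hop v (solCoeff a Gop Hop v) k t‖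
      ≤ 4 * C'' * gevreyWeight C (1 - t) (k + 1) := fun k hk =>
    norm_rhsCoeff_le hC hC'' (hs.trans hst).le ht₁ (fun m => hH m t (hs.trans hst) ht₁)
      (hv k t (hs.trans hst) ht₁)
      fun m hm => ih m (by have := mem_range.mp hk; omega) (hs.trans hst) ht₁
  rw [solCoeff_eq a Gop Hop v ha]
  calc _ ≤ ∑ k ∈ range (n + 1), B / (t - s) ^ a * gevreyWeight C (1 - t) (n - k)
        * (4 * C'' * gevreyWeight C (1 - t) (k + 1)) :=
        norm_sum_le_of_le _ fun k hk => ((Gop _ t s).le_opNorm _).trans <|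
          mul_le_mul (hG _ s t hs hst ht₁) (hw k hk) (norm_nonneg _)
            ((norm_nonneg _).trans (hG _ s t hs hst ht₁))
    _ = 4 * B * C'' / (t - s) ^ a *
        ∑ p ∈ antidiagonal n, gevreyWeight C (1 - t) p.1 * gevreyWeight C (1 - t) (p.2 + 1) := by
        rw [← Nat.sum_antidiagonal_swap]
        simp only [Prod.fst_swap, Prod.snd_swap]
        rw [Nat.sum_antidiagonal_eq_sum_range_succ
          (fun i j => gevreyWeight C (1 - t) j * gevreyWeight C (1 - t) (i + 1)), mul_sum]
        refine sum_congr rfl fun k _ => ?_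
        ring
    _ ≤ 4 * B * C'' / (t - s) ^ a * (3 * gevreyWeight C (1 - t) (n + 1)) := by
        gcongr
        exact sum_antidiagonal_gevreyWeight_mul_le (by linarith) (by linarith) n 1
    _ = 12 * B * C'' / ((1 - s) / (n + 2)) ^ a *
        gevreyWeight C ((1 - s) * ((n + 1) / (n + 2))) (n + 1) := by
        rw [← midScale_sub, ← one_sub_midScale]; ring
    _ ≤ gevreyWeight C (1 - s) (n + a + 1) :=
        div_pow_mul_gevreyWeight_le (by positivity) hBC (by linarith) (by linarith) n

end Construction

lemma one_le_natCast_zpow_sub_two {a : ℕ} (ha : 1 ≤ a) : 1 ≤ (a : ℝ) ^ ((a : ℤ) - 2) := by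
  rcases ha.eq_or_lt with rfl | ha
  · norm_num
  · exact one_le_zpow₀ (by exact_mod_cast ha.le) (by omega)

lemma twelve_mul_exp_one_le_pow {a : ℕ} (ha : 1 ≤ a) {B C'' C : ℝ} (hBC'' : 0 ≤ B * C'')
    (hC : C ≥ max 1 (36 * (a : ℝ) ^ ((a : ℤ) - 2) * B * C'' * Real.exp a)) :
    12 * B * C'' * Real.exp 1 ≤ C ^ a := by
  have hX := one_le_natCast_zpow_sub_two ha
  calc 12 * B * C'' * Real.exp 1 = 12 * (B * C'') * Real.exp 1 := by ring
    _ ≤ 36 * (a : ℝ) ^ ((a : ℤ) - 2) * (B * C'') * Real.exp a :=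
        mul_le_mul (by nlinarith) (Real.exp_le_exp.mpr (by exact_mod_cast ha)) (by positivity)
          (by positivity)
    _ = 36 * (a : ℝ) ^ ((a : ℤ) - 2) * B * C'' * Real.exp a := by ring
    _ ≤ C := le_of_max_le_right hC
    _ ≤ C ^ a := le_self_pow₀ (le_of_max_le_left hC) (by omega)

theorem stmt14_general
    -- scales of Banach spaces (X_s), (Y_s), 0 < s ≤ 1
    {X Y : ℝ → Type*}
    [∀ s, NormedAddCommGroup (X s)] [∀ s, NormedSpace ℝ (X s)] [∀ s, CompleteSpace (X s)]
    [∀ s, NormedAddCommGroup (Y s)] [∀ s, NormedSpace ℝ (Y s)] [∀ s, CompleteSpace (Y s)]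
    (incX : ∀ s' s : ℝ, X s →L[ℝ] X s')
    (incY : ∀ s' s : ℝ, Y s →L[ℝ] Y s')
    -- the operator h of size τ
    (τ : ℝ) (hτ : 0 < τ)
    (hX : ∀ s : ℝ, X s →L[ℝ] X s) (hY : ∀ s : ℝ, Y s →L[ℝ] Y s)
    (hhX_norm : ∀ s : ℝ, 0 < s → s ≤ 1 → ∀ n : ℕ, 1 ≤ n → ∀ x : X s,
      ‖(hX s ^ n) x‖ ≤ τ ^ n / n.factorial * ‖x‖)
    (hhY_norm : ∀ s : ℝ, 0 < s → s ≤ 1 → ∀ n : ℕ, 1 ≤ n → ∀ y : Y s,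
      ‖(hY s ^ n) y‖ ≤ τ ^ n / n.factorial * ‖y‖)
    -- constants
    (a : ℕ) (ha : 1 ≤ a) (B C' C'' C : ℝ) (hC'' : 1 ≤ C'')
    (hC : C ≥ max 1 (36 * (a : ℝ) ^ ((a : ℤ) - 2) * B * C'' * Real.exp a))
    -- (i) the operators F_{n,s}
    (Fop : ℕ → ∀ s : ℝ, X s →L[ℝ] Y s)
    (hFop_h : ∀ (n : ℕ) (s : ℝ), 0 < s → s ≤ 1 →
      (Fop n s).comp (hX s) = (hY s).comp (Fop n s))
    (hFop_norm : ∀ (n : ℕ) (s : ℝ), 0 < s → s < 1 →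
      ‖Fop n s‖ ≤ C' * C ^ n * n.factorial / (1 - s) ^ n)
    -- (ii) the operators G_{n,s',s} : Y_{s'} → X_s for s < s'
    (Gop : ℕ → ∀ s' s : ℝ, Y s' →L[ℝ] X s)
    (hGop_incX : ∀ (n : ℕ) (s₂ s s' : ℝ), 0 < s₂ → s₂ ≤ s → s < s' → s' < 1 →
      (incX s₂ s).comp (Gop n s' s) = Gop n s' s₂)
    (hGop_incY : ∀ (n : ℕ) (s s' s'' : ℝ), 0 < s → s < s' → s' ≤ s'' → s'' < 1 →
      (Gop n s' s).comp (incY s' s'') = Gop n s'' s)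
    (hGop_norm : ∀ (n : ℕ) (s s' : ℝ), 0 < s → s < s' → s' < 1 →
      ‖Gop n s' s‖ ≤ B / (s' - s) ^ a * (C ^ n * n.factorial / (1 - s') ^ n))
    -- Σ_{j+m=N} F_{j,s} ∘ G_{m,s',s} = (if N = 0 then the inclusion Y_{s'} ↪ Y_s else 0)
    (hFG : ∀ (N : ℕ) (s s' : ℝ), 0 < s → s < s' → s' < 1 →
      (∑ p ∈ Finset.HasAntidiagonal.antidiagonal N, (Fop p.1 s).comp (Gop p.2 s' s)) =
        if N = 0 then incY s s' else 0)
    -- (iii) the operators H_{n,s}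
    (Hop : ℕ → ∀ s : ℝ, X s →L[ℝ] Y s)
    (hHop_inc : ∀ (n : ℕ) (s' s : ℝ), 0 < s' → s' ≤ s → s ≤ 1 →
      (incY s' s).comp (Hop n s) = (Hop n s').comp (incX s' s))
    (hHop_h : ∀ (n : ℕ) (s : ℝ), 0 < s → s ≤ 1 →
      (Hop n s).comp (hX s) = (hY s).comp (Hop n s))
    (hHop_norm : ∀ (n : ℕ) (s : ℝ), 0 < s → s < 1 →
      ‖Hop n s‖ ≤ C'' * C ^ n * n.factorial / (1 - s) ^ n)
    -- (iv) the elements v_n ∈ Ẏ₁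
    (v : ℕ → ∀ s : ℝ, Y s)
    (hv_inc : ∀ (n : ℕ) (s' s : ℝ), 0 < s' → s' ≤ s → s < 1 → incY s' s (v n s) = v n s')
    (hv_bound : ∀ (n : ℕ) (s : ℝ), 0 < s → s < 1 →
      ‖v n s‖ ≤ C ^ n * n.factorial / (1 - s) ^ n) :
    ∃ u : ℕ → ∀ s : ℝ, X s,
      (∀ (n : ℕ) (s' s : ℝ), 0 < s' → s' ≤ s → s < 1 → incX s' s (u n s) = u n s') ∧
      (∀ (n : ℕ) (s : ℝ), 0 < s → s < 1 →
        ‖u n s‖ ≤ C ^ (n + a + 1) * (n + a + 1).factorial / (1 - s) ^ (n + a + 1)) ∧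
      ∀ s : ℝ, 0 < s → s < 1 → τ * C / (1 - s) < 1 →
        -- the operator series F_s = Σ hⁿ F_{n,s}, H_s = Σ hⁿ H_{n,s} converge in operator norm
        ∃ (Fs Hs : X s →L[ℝ] Y s),
          HasSum (fun n : ℕ => (hY s ^ n).comp (Fop n s)) Fs ∧
          HasSum (fun n : ℕ => (hY s ^ n).comp (Hop n s)) Hs ∧
          -- v = Σ hⁿ v_{n,s} and u = Σ hⁿ u_{n,s} converge absolutely
          Summable (fun n : ℕ => ‖(hY s ^ n) (v n s)‖) ∧
          Summable (fun n : ℕ => ‖(hX s ^ n) (u n s)‖) ∧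
          ∃ (vs : Y s) (us : X s),
            HasSum (fun n : ℕ => (hY s ^ n) (v n s)) vs ∧
            HasSum (fun n : ℕ => (hX s ^ n) (u n s)) us ∧
            -- (F_s + h^a·H_s)(u) = v
            Fs us + (hY s ^ a) (Hs us) = vs := by
  
  have hC₁ : 1 ≤ C := le_of_max_le_left hC
  have hB : 0 ≤ B := by
    have h := (norm_nonneg _).trans (hGop_norm 0 (1 / 4) (1 / 2) (by norm_num) (by norm_num)
      (by norm_num))
    norm_num at h
    simpa using (le_div_iff₀ (by positivity)).mp h
  have hF : ∀ n s, 0 < s → s < 1 → ‖Fop n s‖ ≤ C' * gevreyWeight C (1 - s) n := fun n s h₀ h₁ =>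
    (hFop_norm n s h₀ h₁).trans_eq (mul_gevreyWeight _ _).symm
  have hH : ∀ n s, 0 < s → s < 1 → ‖Hop n s‖ ≤ C'' * gevreyWeight C (1 - s) n := fun n s h₀ h₁ =>
    (hHop_norm n s h₀ h₁).trans_eq (mul_gevreyWeight _ _).symm
  set u := solCoeff a Gop Hop v
  have hu_inc := solCoeff_compatible ha hGop_incX hGop_incY hHop_inc hv_inc
  have hw : ∀ k, IsCompatibleFamily incY (rhsCoeff a Hop v u k) := fun k =>
    rhsCoeff_compatible hHop_inc hv_inc fun m _ => hu_inc m
  have hu_norm := norm_solCoeff_le ha hC₁ hC'' hB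
    (twelve_mul_exp_one_le_pow ha (mul_nonneg hB (by linarith)) hC) hGop_norm hH hv_bound
  refine ⟨u, hu_inc, fun n s h₀ h₁ => hu_norm n h₀ h₁, fun s h₀ h₁ hq => ?_⟩
  have hC₀ : 0 ≤ C := by linarith
  have hr : 0 < 1 - s := by linarith
  have hFs := summable_norm_pow_comp hτ.le (hhY_norm s h₀ h₁.le) hC₀ hr hq (hF · s h₀ h₁)
  have hHs := summable_norm_pow_comp hτ.le (hhY_norm s h₀ h₁.le) hC₀ hr hq (hH · s h₀ h₁)
  have hus := summable_norm_pow_apply hτ.le (hhX_norm s h₀ h₁.le) hC₀ hr hq (b := a + 1)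
    (hu_norm · h₀ h₁)
  refine ⟨_, _, hFs.of_norm.hasSum, hHs.of_norm.hasSum,
    summable_norm_pow_apply hτ.le (hhY_norm s h₀ h₁.le) hC₀ hr hq (b := 0) (hv_bound · s h₀ h₁),
    hus, _, _, ?_, hus.of_norm.hasSum, rfl⟩
  exact hasSum_pow_apply_of_coeff_eq a (hFop_h · s h₀ h₁.le) (hHop_h · s h₀ h₁.le) hFs hHs hus
    fun N => sum_antidiagonal_apply_solCoeff_add_eq ha hGop_incY hFG hw N h₀ h₁

theorem stmt14
    -- scales of Banach spaces (X_s), (Y_s), 0 < s ≤ 1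
    {X Y : ℝ → Type*}
    [∀ s, NormedAddCommGroup (X s)] [∀ s, NormedSpace ℝ (X s)] [∀ s, CompleteSpace (X s)]
    [∀ s, NormedAddCommGroup (Y s)] [∀ s, NormedSpace ℝ (Y s)] [∀ s, CompleteSpace (Y s)]
    (incX : ∀ s' s : ℝ, X s →L[ℝ] X s')
    (incY : ∀ s' s : ℝ, Y s →L[ℝ] Y s')
    (hincX_norm : ∀ s' s : ℝ, 0 < s' → s' ≤ s → s ≤ 1 → ∀ x : X s, ‖incX s' s x‖ ≤ ‖x‖)
    (hincY_norm : ∀ s' s : ℝ, 0 < s' → s' ≤ s → s ≤ 1 → ∀ y : Y s, ‖incY s' s y‖ ≤ ‖y‖)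
    (hincX_id : ∀ s : ℝ, incX s s = ContinuousLinearMap.id ℝ (X s))
    (hincY_id : ∀ s : ℝ, incY s s = ContinuousLinearMap.id ℝ (Y s))
    (hincX_comp : ∀ s'' s' s : ℝ, 0 < s'' → s'' ≤ s' → s' ≤ s → s ≤ 1 →
      (incX s'' s').comp (incX s' s) = incX s'' s)
    (hincY_comp : ∀ s'' s' s : ℝ, 0 < s'' → s'' ≤ s' → s' ≤ s → s ≤ 1 →
      (incY s'' s').comp (incY s' s) = incY s'' s)
    -- the operator h of size τ
    (τ : ℝ) (hτ : 0 < τ)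
    (hX : ∀ s : ℝ, X s →L[ℝ] X s) (hY : ∀ s : ℝ, Y s →L[ℝ] Y s)
    (hhX_norm : ∀ s : ℝ, 0 < s → s ≤ 1 → ∀ n : ℕ, 1 ≤ n → ∀ x : X s,
      ‖(hX s ^ n) x‖ ≤ τ ^ n / n.factorial * ‖x‖)
    (hhY_norm : ∀ s : ℝ, 0 < s → s ≤ 1 → ∀ n : ℕ, 1 ≤ n → ∀ y : Y s,
      ‖(hY s ^ n) y‖ ≤ τ ^ n / n.factorial * ‖y‖)
    (hhX_comm : ∀ s' s : ℝ, 0 < s' → s' ≤ s → s ≤ 1 →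
      (incX s' s).comp (hX s) = (hX s').comp (incX s' s))
    (hhY_comm : ∀ s' s : ℝ, 0 < s' → s' ≤ s → s ≤ 1 →
      (incY s' s).comp (hY s) = (hY s').comp (incY s' s))
    -- constants
    (a : ℕ) (ha : 1 ≤ a) (B C' C'' C : ℝ) (hC'' : 1 ≤ C'')
    (hC : C ≥ max 1 (36 * (a : ℝ) ^ ((a : ℤ) - 2) * B * C'' * Real.exp a))
    -- (i) the operators F_{n,s}
    (Fop : ℕ → ∀ s : ℝ, X s →L[ℝ] Y s)
    (hFop_inc : ∀ (n : ℕ) (s' s : ℝ), 0 < s' → s' ≤ s → s ≤ 1 →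
      (incY s' s).comp (Fop n s) = (Fop n s').comp (incX s' s))
    (hFop_h : ∀ (n : ℕ) (s : ℝ), 0 < s → s ≤ 1 →
      (Fop n s).comp (hX s) = (hY s).comp (Fop n s))
    (hFop_norm : ∀ (n : ℕ) (s : ℝ), 0 < s → s < 1 →
      ‖Fop n s‖ ≤ C' * C ^ n * n.factorial / (1 - s) ^ n)
    -- (ii) the operators G_{n,s',s} : Y_{s'} → X_s for s < s'
    (Gop : ℕ → ∀ s' s : ℝ, Y s' →L[ℝ] X s)
    (hGop_incX : ∀ (n : ℕ) (s₂ s s' : ℝ), 0 < s₂ → s₂ ≤ s → s < s' → s' < 1 →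
      (incX s₂ s).comp (Gop n s' s) = Gop n s' s₂)
    (hGop_incY : ∀ (n : ℕ) (s s' s'' : ℝ), 0 < s → s < s' → s' ≤ s'' → s'' < 1 →
      (Gop n s' s).comp (incY s' s'') = Gop n s'' s)
    (hGop_h : ∀ (n : ℕ) (s s' : ℝ), 0 < s → s < s' → s' < 1 →
      (Gop n s' s).comp (hY s') = (hX s).comp (Gop n s' s))
    (hGop_norm : ∀ (n : ℕ) (s s' : ℝ), 0 < s → s < s' → s' < 1 →
      ‖Gop n s' s‖ ≤ B / (s' - s) ^ a * (C ^ n * n.factorial / (1 - s') ^ n))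
    -- Σ_{j+m=N} F_{j,s} ∘ G_{m,s',s} = (if N = 0 then the inclusion Y_{s'} ↪ Y_s else 0)
    (hFG : ∀ (N : ℕ) (s s' : ℝ), 0 < s → s < s' → s' < 1 →
      (∑ p ∈ Finset.HasAntidiagonal.antidiagonal N, (Fop p.1 s).comp (Gop p.2 s' s)) =
        if N = 0 then incY s s' else 0)
    -- (iii) the operators H_{n,s}
    (Hop : ℕ → ∀ s : ℝ, X s →L[ℝ] Y s)
    (hHop_inc : ∀ (n : ℕ) (s' s : ℝ), 0 < s' → s' ≤ s → s ≤ 1 →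
      (incY s' s).comp (Hop n s) = (Hop n s').comp (incX s' s))
    (hHop_h : ∀ (n : ℕ) (s : ℝ), 0 < s → s ≤ 1 →
      (Hop n s).comp (hX s) = (hY s).comp (Hop n s))
    (hHop_norm : ∀ (n : ℕ) (s : ℝ), 0 < s → s < 1 →
      ‖Hop n s‖ ≤ C'' * C ^ n * n.factorial / (1 - s) ^ n)
    -- (iv) the elements v_n ∈ Ẏ₁
    (v : ℕ → ∀ s : ℝ, Y s)
    (hv_inc : ∀ (n : ℕ) (s' s : ℝ), 0 < s' → s' ≤ s → s < 1 → incY s' s (v n s) = v n s')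
    (hv_bound : ∀ (n : ℕ) (s : ℝ), 0 < s → s < 1 →
      ‖v n s‖ ≤ C ^ n * n.factorial / (1 - s) ^ n) :
    ∃ u : ℕ → ∀ s : ℝ, X s,
      (∀ (n : ℕ) (s' s : ℝ), 0 < s' → s' ≤ s → s < 1 → incX s' s (u n s) = u n s') ∧
      (∀ (n : ℕ) (s : ℝ), 0 < s → s < 1 →
        ‖u n s‖ ≤ C ^ (n + a + 1) * (n + a + 1).factorial / (1 - s) ^ (n + a + 1)) ∧
      ∀ s : ℝ, 0 < s → s < 1 → τ * C / (1 - s) < 1 →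
        -- the operator series F_s = Σ hⁿ F_{n,s}, H_s = Σ hⁿ H_{n,s} converge in operator norm
        ∃ (Fs Hs : X s →L[ℝ] Y s),
          HasSum (fun n : ℕ => (hY s ^ n).comp (Fop n s)) Fs ∧
          HasSum (fun n : ℕ => (hY s ^ n).comp (Hop n s)) Hs ∧
          -- v = Σ hⁿ v_{n,s} and u = Σ hⁿ u_{n,s} converge absolutely
          Summable (fun n : ℕ => ‖(hY s ^ n) (v n s)‖) ∧
          Summable (fun n : ℕ => ‖(hX s ^ n) (u n s)‖) ∧
          ∃ (vs : Y s) (us : X s),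
            HasSum (fun n : ℕ => (hY s ^ n) (v n s)) vs ∧
            HasSum (fun n : ℕ => (hX s ^ n) (u n s)) us ∧
            -- (F_s + h^a·H_s)(u) = v
            Fs us + (hY s ^ a) (Hs us) = vs :=
  stmt14_general incX incY τ hτ hX hY hhX_norm hhY_norm a ha B C' C'' C hC'' hC Fop hFop_h hFop_norm
    Gop hGop_incX hGop_incY hGop_norm hFG Hop hHop_inc hHop_h hHop_norm v hv_inc hv_bound
end

section
/- For all integers p ≥ 0 and a ≥ 1, one has (p+a)^a ≤ a^{a−1}·(p+1)·(p+2)·⋯·(p+a); equivalently, (p+a)^a · p! ≤ a^{a−1} · (p+a)!. -/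
open Finset Nat

lemma prod_Icc_add_mul_factorial (p a : ℕ) :
    (∏ i ∈ Icc 1 a, (p + i)) * p ! = (p + a)! := by
  induction a with
  | zero => simp
  | succ a ih =>
    rw [prod_Icc_succ_top (by omega), mul_right_comm, ih, ← add_assoc, factorial_succ, mul_comm]

/-- Each of the first `a - 1` factors `p + i` loses at most a factor `a` against `p + a`,
and the last one equals it. -/
lemma pow_le_pow_pred_mul_prod_Icc (p a : ℕ) (ha : 1 ≤ a) :
    (p + a) ^ a ≤ a ^ (a - 1) * ∏ i ∈ Icc 1 a, (p + i) := by
  obtain ⟨b, rfl⟩ := Nat.exists_eq_add_of_le' ha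
  have hfactor : ∀ i ∈ Icc 1 b, p + (b + 1) ≤ (b + 1) * (p + i) := by
    intro i hi
    have := (mem_Icc.mp hi).1
    nlinarith
  calc (p + (b + 1)) ^ (b + 1) = (p + (b + 1)) ^ b * (p + (b + 1)) := pow_succ _ _
    _ ≤ (∏ i ∈ Icc 1 b, (b + 1) * (p + i)) * (p + (b + 1)) := by
        gcongr
        simpa using pow_card_le_prod _ _ _ hfactor
    _ = (b + 1) ^ (b + 1 - 1) * ∏ i ∈ Icc 1 (b + 1), (p + i) := by
        rw [prod_mul_distrib, prod_const, card_Icc, prod_Icc_succ_top (by omega)]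
        simp only [add_tsub_cancel_right]
        ring

theorem stmt16 (p a : ℕ) (ha : 1 ≤ a) :
    (p + a) ^ a ≤ a ^ (a - 1) * ∏ i ∈ Finset.Icc 1 a, (p + i) ∧
      (p + a) ^ a * p.factorial ≤ a ^ (a - 1) * (p + a).factorial := by
  have key := pow_le_pow_pred_mul_prod_Icc p a ha
  refine ⟨key, ?_⟩
  calc (p + a) ^ a * p ! ≤ a ^ (a - 1) * (∏ i ∈ Icc 1 a, (p + i)) * p ! := by gcongr
    _ = a ^ (a - 1) * (p + a)! := by rw [mul_assoc, prod_Icc_add_mul_factorial]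
end

section
/- Let s be a real number with 0 < s < 1, and let N ≥ 1 and a ≥ 1 be integers. Define s' := s + a·(1−s)/(N+a). Then s < s' < 1 and 1/((s'−s)^a · (1−s')^N) ≤ (N+a)^a · e^a / (a^a · (1−s)^{N+a}). -/
theorem stmt17 (s : ℝ) (hs0 : 0 < s) (hs1 : s < 1) (N a : ℕ) (hN : 1 ≤ N) (ha : 1 ≤ a) :
    s < s + a * (1 - s) / (N + a) ∧
    s + a * (1 - s) / (N + a) < 1 ∧
    1 / ((s + a * (1 - s) / (N + a) - s) ^ a * (1 - (s + a * (1 - s) / (N + a))) ^ N) ≤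
      (N + a : ℝ) ^ a * Real.exp a / ((a : ℝ) ^ a * (1 - s) ^ (N + a)) := by
  have hN' : (1:ℝ) ≤ N := by exact_mod_cast hN
  have ha' : (1:ℝ) ≤ a := by exact_mod_cast ha
  have hNpos : (0:ℝ) < N := by linarith
  have hapos : (0:ℝ) < a := by linarith
  have hNa : (0:ℝ) < N + a := by linarith
  have h1s : (0:ℝ) < 1 - s := by linarith
  have hterm : 0 < (a:ℝ) * (1 - s) / (N + a) := by positivity
  refine ⟨by linarith, ?_, ?_⟩
  · have : (a:ℝ) * (1 - s) / (N + a) < 1 - s := by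
      rw [div_lt_iff₀ hNa]
      nlinarith
    linarith
  · have e1 : s + a * (1 - s) / (N + a) - s = (a:ℝ) * (1 - s) / (N + a) := by ring
    have e2 : 1 - (s + a * (1 - s) / (N + a)) = (N:ℝ) * (1 - s) / (N + a) := by
      field_simp
      ring
    rw [e1, e2]
    have hX : ((a:ℝ) * (1 - s) / (N + a)) ^ a * ((N:ℝ) * (1 - s) / (N + a)) ^ N
        = (a:ℝ) ^ a * (N:ℝ) ^ N * (1 - s) ^ (N + a) / (N + a) ^ (N + a) := by
      rw [div_pow, div_pow, mul_pow, mul_pow, div_mul_div_comm]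
      ring
    rw [hX]
    have key : ((N:ℝ) + a) ^ N ≤ (N:ℝ) ^ N * Real.exp a := by
      have h1 : (1 + (a:ℝ) / N) ≤ Real.exp ((a:ℝ) / N) := by
        have := Real.add_one_le_exp ((a:ℝ) / N)
        linarith
      have h2 : ((N:ℝ) + a) = N * (1 + (a:ℝ) / N) := by field_simp
      calc ((N:ℝ) + a) ^ N = (N:ℝ) ^ N * (1 + (a:ℝ) / N) ^ N := by
              rw [h2, mul_pow]
        _ ≤ (N:ℝ) ^ N * Real.exp ((a:ℝ) / N) ^ N := by
              gcongr
        _ = (N:ℝ) ^ N * Real.exp a := by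
              have hc : (N:ℝ) * ((a:ℝ) / N) = a := by field_simp
              rw [← Real.exp_nat_mul, hc]
    rw [one_div, inv_div, div_le_div_iff₀ (by positivity) (by positivity)]
    have expand : ((N:ℝ) + a) ^ (N + a) = ((N:ℝ) + a) ^ a * ((N:ℝ) + a) ^ N := by
      rw [pow_add]; ring
    calc ((N:ℝ) + a) ^ (N + a) * ((a:ℝ) ^ a * (1 - s) ^ (N + a))
        = (((N:ℝ) + a) ^ N) * (((N:ℝ) + a) ^ a * ((a:ℝ) ^ a * (1 - s) ^ (N + a))) := by
          rw [expand]; ring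
      _ ≤ ((N:ℝ) ^ N * Real.exp a) * (((N:ℝ) + a) ^ a * ((a:ℝ) ^ a * (1 - s) ^ (N + a))) := by
          gcongr
      _ = ((N:ℝ) + a) ^ a * Real.exp a * ((a:ℝ) ^ a * (N:ℝ) ^ N * (1 - s) ^ (N + a)) := by
          ring
end
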